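/- Faà di Bruno's formula: if f and g are n-times differentiable real functions, then the n-th derivative of the composite Φ(t) = f(g(t)) equals Y_n(f₁,g₁; f₂,g₂; ...; f_n,g_n), where f_h = f^{(h)}(g(t)), g_k = g^{(k)}(t), and Y_n is the n-th complete Bell polynomial. -/

import Mathlib

/-- Partial (exponential) Bell polynomials `B_{n,k}(g₁, g₂, …)`, defined by the recursion
`B_{n,k} = ∑_{h=0}^{n-k} C(n-1,h) B_{n-h-1,k-1} g_{h+1}`, with `B_{0,0} = 1` and
`B_{n,0} = 0` for `n ≥ 1` (and `B_{0,k} = 0` for `k ≥ 1`). -/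
def bellB : ℕ → ℕ → (ℕ → ℝ) → ℝ
  | 0, 0, _ => 1
  | _+1, 0, _ => 0
  | 0, _+1, _ => 0
  | n+1, k+1, g => ∑ h ∈ Finset.range (n + 1 - k), (n.choose h : ℝ) * bellB (n - h) k g * g (h + 1)
  termination_by n _ _ => n
  decreasing_by omega


/-- The complete Bell polynomial `Y_n(f₁,g₁;…;f_n,g_n) = ∑_{k=1}^n B_{n,k}(g₁,…) f_k`. -/
def bellY (n : ℕ) (f g : ℕ → ℝ) : ℝ := ∑ k ∈ Finset.Icc 1 n, bellB n k g * f k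

/-!
Differentiating once gives `(f ∘ g)' = g' · (f' ∘ g)`. Applying the Leibniz rule to this product
and the induction hypothesis to `f' ∘ g` (at every lower order) expresses `(f ∘ g)^{(n+1)}` as a
double sum whose inner sums are exactly the recursion defining `B_{n+1,k+1}`.
-/

open Finset

lemma bellB_eq_zero_of_lt (g : ℕ → ℝ) : ∀ {n k : ℕ}, n < k → bellB n k g = 0
  | 0, _ + 1, _ => by simp [bellB]
  | n + 1, k + 1, h => by simp [bellB, show n + 1 - k = 0 by omega]

lemma bellB_succ_zero (n : ℕ) (g : ℕ → ℝ) : bellB (n + 1) 0 g = 0 := by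
  simp [bellB]

lemma sum_range_bellB_mul_of_le {m N : ℕ} (hmN : m ≤ N) (g F : ℕ → ℝ) :
    ∑ k ∈ range (N + 1), bellB m k g * F k = ∑ k ∈ range (m + 1), bellB m k g * F k := by
  refine (sum_subset (range_subset_range.mpr (by omega)) fun k _ hk => ?_).symm
  rw [bellB_eq_zero_of_lt g (by simpa using hk), zero_mul]

lemma bellB_succ_succ_eq_sum_range (n k : ℕ) (g : ℕ → ℝ) :
    bellB (n + 1) (k + 1) g =
      ∑ h ∈ range (n + 1), (n.choose h : ℝ) * bellB (n - h) k g * g (h + 1) := by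
  rw [bellB]
  refine sum_subset (range_subset_range.mpr (by omega)) fun h hh hhk => ?_
  simp only [mem_range] at hh hhk
  rw [bellB_eq_zero_of_lt g (by omega), mul_zero, zero_mul]

theorem iteratedDeriv_comp_eq_sum_bellB {n : ℕ} {f g : ℝ → ℝ} (hf : ContDiff ℝ n f)
    (hg : ContDiff ℝ n g) (t : ℝ) :
    iteratedDeriv n (f ∘ g) t =
      ∑ k ∈ range (n + 1), bellB n k (fun j => iteratedDeriv j g t) * iteratedDeriv k f (g t) := by
  set D : ℕ → ℝ := fun j => iteratedDeriv j g t
  induction n using Nat.strong_induction_on generalizing f with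
  | _ n ih =>
  cases n with
  | zero => simp [bellB]
  | succ n =>
  push_cast at hf hg
  have hgn : ContDiff ℝ n g := hg.of_le (by simp)
  have hf' : ContDiff ℝ n (deriv f) := hf.deriv'
  have chain : deriv (f ∘ g) = deriv g * (deriv f ∘ g) := by
    funext s
    rw [Pi.mul_apply, Function.comp_apply, mul_comm,
      deriv_comp s (hf.differentiable (by simp) (g s)) (hg.differentiable (by simp) s)]
  calc iteratedDeriv (n + 1) (f ∘ g) t
      = iteratedDeriv n (deriv g * (deriv f ∘ g)) t := by
        rw [iteratedDeriv_succ', chain]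
    _ = ∑ h ∈ range (n + 1), (n.choose h : ℝ) * D (h + 1) *
          iteratedDeriv (n - h) (deriv f ∘ g) t := by
        rw [iteratedDeriv_mul hg.deriv'.contDiffAt (hf'.comp hgn).contDiffAt]
        simp only [D, iteratedDeriv_succ']
    _ = ∑ h ∈ range (n + 1), (n.choose h : ℝ) * D (h + 1) *
          ∑ k ∈ range (n + 1), bellB (n - h) k D * iteratedDeriv (k + 1) f (g t) := by
        refine sum_congr rfl fun h _ => ?_
        have hle : n - h ≤ n := Nat.sub_le n h
        rw [ih (n - h) (Nat.sub_lt_succ n h) (hf'.of_le (by exact_mod_cast hle))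
          (hgn.of_le (by exact_mod_cast hle)), sum_range_bellB_mul_of_le hle]
        simp only [iteratedDeriv_succ']
    _ = ∑ k ∈ range (n + 1), bellB (n + 1) (k + 1) D * iteratedDeriv (k + 1) f (g t) := by
        simp_rw [bellB_succ_succ_eq_sum_range, mul_sum, sum_mul]
        rw [sum_comm]
        exact sum_congr rfl fun _ _ => sum_congr rfl fun _ _ => by ring
    _ = ∑ k ∈ range (n + 2), bellB (n + 1) k D * iteratedDeriv k f (g t) := by
        rw [sum_range_succ' _ (n + 1), bellB_succ_zero, zero_mul, add_zero]

/-- Faà di Bruno's formula: the n-th derivative of a composite function is the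
complete Bell polynomial in the derivatives of the two functions. -/
theorem faa_di_bruno (n : ℕ) (hn : 1 ≤ n) (f g : ℝ → ℝ)
    (hf : ContDiff ℝ n f) (hg : ContDiff ℝ n g) (t : ℝ) :
    iteratedDeriv n (f ∘ g) t =
      bellY n (fun h => iteratedDeriv h f (g t)) (fun k => iteratedDeriv k g t) := by
  obtain ⟨m, rfl⟩ : ∃ m, n = m + 1 := ⟨n - 1, by omega⟩
  rw [iteratedDeriv_comp_eq_sum_bellB hf hg, bellY, sum_range_eq_add_Ico _ (by omega),
    bellB_succ_zero, zero_mul, zero_add, Ico_add_one_right_eq_Icc]
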